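/- arXiv:2402.18704 — 3 statements merged into one kernel-verified Lean document; each statement's English description precedes it below -/
import Mathlib

section
/- If every nonzero proper ideal of a commutative ring R is an sdf-absorbing ideal, then R/nil(R) is a von Neumann regular ring. -/
/-!
For `a` not nilpotent, the ideal `I = (a²) + nil(R)` is either `R` or nonzero and proper,
hence sdf-absorbing. Applying this to `a² - (a²)² ∈ I` gives `a ± a² ∈ I`, so `a ∈ I`,
i.e. `a ≡ a² c` modulo `nil(R)`.
-/

/-- A proper ideal `I` is sdf-absorbing if whenever `a^2 - b^2 ∈ I` for nonzero
`a, b`, then `a + b ∈ I` or `a - b ∈ I`. -/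
def IsSdfAbsorbing {R : Type*} [CommRing R] (I : Ideal R) : Prop :=
  I ≠ ⊤ ∧ ∀ a b : R, a ≠ 0 → b ≠ 0 → a ^ 2 - b ^ 2 ∈ I → a + b ∈ I ∨ a - b ∈ I

theorem IsSdfAbsorbing.mem_of_sq_mem {R : Type*} [CommRing R] {I : Ideal R}
    (hI : IsSdfAbsorbing I) {a : R} (ha : a ≠ 0) (ha2 : a ^ 2 ≠ 0) (h : a ^ 2 ∈ I) : a ∈ I := by
  have hsub : a ^ 2 - (a ^ 2) ^ 2 ∈ I := sub_mem h (I.pow_mem_of_mem h 2 two_pos)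
  rcases hI.2 a (a ^ 2) ha ha2 hsub with hadd | hsub
  · simpa using sub_mem hadd h
  · simpa using add_mem hsub h

theorem mem_span_sq_sup_nilradical {R : Type*} [CommRing R]
    (h : ∀ I : Ideal R, I ≠ ⊥ → I ≠ ⊤ → IsSdfAbsorbing I) (a : R) :
    a ∈ Ideal.span {a ^ 2} ⊔ nilradical R := by
  by_cases ha2 : a ^ 2 = 0
  · exact Ideal.mem_sup_right (mem_nilradical.mpr ⟨2, ha2⟩)
  have ha : a ≠ 0 := by rintro rfl; simp at ha2
  set I := Ideal.span {a ^ 2} ⊔ nilradical R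
  have hmem : a ^ 2 ∈ I := Ideal.mem_sup_left (Ideal.mem_span_singleton_self _)
  by_cases hI : I = ⊤
  · simp [hI]
  have hbot : I ≠ ⊥ := fun hbot => ha2 (by rwa [hbot, Ideal.mem_bot] at hmem)
  exact (h I hbot hI).mem_of_sq_mem ha ha2 hmem

theorem stmt9_general {R : Type*} [CommRing R]
    (h : ∀ I : Ideal R, I ≠ ⊥ → I ≠ ⊤ → IsSdfAbsorbing I) :
    ∀ x : R ⧸ nilradical R, ∃ y : R ⧸ nilradical R, x ^ 2 * y = x := by
  intro x
  obtain ⟨a, rfl⟩ := Ideal.Quotient.mk_surjective x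
  have ha := mem_span_sq_sup_nilradical h a
  rw [← Ideal.mem_quotient_iff_mem_sup, Ideal.map_span, Set.image_singleton, map_pow,
    Ideal.mem_span_singleton'] at ha
  obtain ⟨y, hy⟩ := ha
  exact ⟨y, by rw [mul_comm, hy]⟩

theorem stmt9 {R : Type*} [CommRing R] [Nontrivial R]
    (h : ∀ I : Ideal R, I ≠ ⊥ → I ≠ ⊤ → IsSdfAbsorbing I) :
    ∀ x : R ⧸ nilradical R, ∃ y : R ⧸ nilradical R, x ^ 2 * y = x :=
  stmt9_general h
end

section
/- Let R be a reduced commutative ring in which 2 is a unit. Then every proper ideal of R is an sdf-absorbing ideal if and only if R is a field. -/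
/-!
When `2` is a unit, the substitution `a = (x + y) / 2`, `b = (x - y) / 2` turns the
sdf-absorbing condition into: `x * y ∈ I` with `x ≠ ± y` forces `x ∈ I` or `y ∈ I`.
For `I = ⊥` in a reduced ring this rules out zero divisors, since `u * v = 0` with
`u = ± v` makes `v` nilpotent. In the resulting domain, a nonzero nonunit `x` is
refuted by the pair `x`, `x + x ^ 2`, whose product lies in `(x ^ 2)`: it forces
`x ∈ (x ^ 2)`, i.e. `x` is a unit.
-/

section

variable {R : Type*} [CommRing R]

theorem Ideal.IsPrime.isSdfAbsorbing {P : Ideal R} (hP : P.IsPrime) : IsSdfAbsorbing P := by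
  refine ⟨hP.ne_top, fun a b _ _ hab => hP.mem_or_mem ?_⟩
  rwa [← sq_sub_sq]

theorem IsSdfAbsorbing.mem_or_mem_of_mul_mem {I : Ideal R} (hI : IsSdfAbsorbing I)
    (h2 : IsUnit (2 : R)) {x y : R} (hadd : x + y ≠ 0) (hsub : x - y ≠ 0) (hxy : x * y ∈ I) :
    x ∈ I ∨ y ∈ I := by
  obtain ⟨t, ht⟩ := h2.exists_right_inv
  have ha : t * (x + y) ≠ 0 := fun h0 => hadd (by linear_combination 2 * h0 - (x + y) * ht)
  have hb : t * (x - y) ≠ 0 := fun h0 => hsub (by linear_combination 2 * h0 - (x - y) * ht)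
  have hsq : (t * (x + y)) ^ 2 - (t * (x - y)) ^ 2 = x * y := by
    linear_combination (t * 2 + 1) * x * y * ht
  rcases hI.2 _ _ ha hb (hsq ▸ hxy) with h | h
  · left; convert h using 1; linear_combination -x * ht
  · right; convert h using 1; linear_combination -y * ht

theorem noZeroDivisors_of_isSdfAbsorbing_bot [IsReduced R] (h2 : IsUnit (2 : R))
    (h : IsSdfAbsorbing (⊥ : Ideal R)) : NoZeroDivisors R := by
  refine ⟨fun {u v} huv => ?_⟩
  by_contra! hne
  have hv2 : v ^ 2 ≠ 0 := pow_ne_zero 2 hne.2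
  have hadd : u + v ≠ 0 := fun h0 => hv2 (by linear_combination v * h0 - huv)
  have hsub : u - v ≠ 0 := fun h0 => hv2 (by linear_combination huv - v * h0)
  rcases h.mem_or_mem_of_mul_mem h2 hadd hsub (by rw [huv]; exact zero_mem _) with hu | hv
  · exact hne.1 hu
  · exact hne.2 hv

theorem not_isSdfAbsorbing_span_sq [IsDomain R] (h2 : IsUnit (2 : R)) {x : R} (hx : x ≠ 0) :
    ¬ IsSdfAbsorbing (Ideal.span {x ^ 2}) := by
  intro h
  have hxu : ¬ IsUnit x := fun hu =>
    h.1 (Ideal.span_singleton_eq_top.mpr (hu.pow 2))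
  have hadd : x + (x + x ^ 2) ≠ 0 := by
    have h2x : 2 + x ≠ 0 := fun h0 => hxu (by rw [eq_neg_of_add_eq_zero_right h0]; exact h2.neg)
    rw [show x + (x + x ^ 2) = x * (2 + x) by ring]
    exact mul_ne_zero hx h2x
  have hsub : x - (x + x ^ 2) ≠ 0 := by
    rw [show x - (x + x ^ 2) = -x ^ 2 by ring]
    exact neg_ne_zero.mpr (pow_ne_zero 2 hx)
  have hprod : x * (x + x ^ 2) ∈ Ideal.span {x ^ 2} :=
    Ideal.mem_span_singleton.mpr ⟨1 + x, by ring⟩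
  have hmem : x ∈ Ideal.span {x ^ 2} := by
    rcases h.mem_or_mem_of_mul_mem h2 hadd hsub hprod with hx' | hx'
    · exact hx'
    · simpa using Ideal.sub_mem _ hx' (Ideal.mem_span_singleton_self (x ^ 2))
  obtain ⟨c, hc⟩ := Ideal.mem_span_singleton'.mp hmem
  refine hxu (IsUnit.of_mul_eq_one c (mul_left_cancel₀ hx ?_))
  linear_combination hc

end

theorem stmt11 {R : Type*} [CommRing R] [Nontrivial R] [IsReduced R]
    (h2 : IsUnit (2 : R)) :
    (∀ I : Ideal R, I ≠ ⊤ → IsSdfAbsorbing I) ↔ IsField R := by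
  constructor
  · intro h
    have := noZeroDivisors_of_isSdfAbsorbing_bot h2 (h ⊥ bot_ne_top)
    have : IsDomain R := NoZeroDivisors.to_isDomain R
    refine ⟨exists_pair_ne R, mul_comm, fun {x} hx => ?_⟩
    have htop : Ideal.span {x ^ 2} = ⊤ := by
      by_contra hne
      exact not_isSdfAbsorbing_span_sq h2 hx (h _ hne)
    rw [Ideal.span_singleton_eq_top, isUnit_pow_iff two_ne_zero] at htop
    exact htop.exists_right_inv
  · intro hf I hI
    let := hf.toField
    obtain rfl := (Ideal.eq_bot_or_top I).resolve_right hI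
    exact Ideal.isPrime_bot.isSdfAbsorbing
end

section
/- Let R be a commutative ring, I a nonzero proper ideal of R. Then the ideal (I, X) of R[X] generated by I and X is an sdf-absorbing ideal of R[X] if and only if I is an sdf-absorbing ideal of R. -/
open Polynomial

namespace IsSdfAbsorbing

variable {R S : Type*} [CommRing R] [CommRing S] {I : Ideal R}

theorem mem_of_sq_mem_s14 (hI : IsSdfAbsorbing I) (hI0 : I ≠ ⊥) {b : R} (hb : b ^ 2 ∈ I) :
    b ∈ I := by
  obtain rfl | hb0 := eq_or_ne b 0
  · exact I.zero_mem
  obtain ⟨x, hxI, hx0⟩ := Submodule.ne_bot_iff I |>.mp hI0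
  have hxb : x ^ 2 - b ^ 2 ∈ I := I.sub_mem (I.pow_mem_of_mem hxI 2 two_pos) hb
  rcases hI.2 x b hx0 hb0 hxb with h | h
  · simpa using I.sub_mem h hxI
  · simpa using I.sub_mem hxI h

theorem add_mem_or_sub_mem (hI : IsSdfAbsorbing I) (hI0 : I ≠ ⊥) {a b : R}
    (hab : a ^ 2 - b ^ 2 ∈ I) : a + b ∈ I ∨ a - b ∈ I := by
  obtain rfl | ha := eq_or_ne a 0
  · exact .inl <| by simpa using hI.mem_of_sq_mem_s14 hI0 (by simpa using I.neg_mem hab)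
  obtain rfl | hb := eq_or_ne b 0
  · exact .inl <| by simpa using hI.mem_of_sq_mem_s14 hI0 (by simpa using hab)
  exact hI.2 a b ha hb hab

theorem comap (hI : IsSdfAbsorbing I) (hI0 : I ≠ ⊥) (f : S →+* R) :
    IsSdfAbsorbing (I.comap f) := by
  refine ⟨Ideal.comap_ne_top f hI.1, fun a b _ _ hab => ?_⟩
  simp only [Ideal.mem_comap, map_add, map_sub, map_pow] at hab ⊢
  exact hI.add_mem_or_sub_mem hI0 hab

theorem comap_of_injective (hI : IsSdfAbsorbing I) {f : S →+* R}
    (hf : Function.Injective f) : IsSdfAbsorbing (I.comap f) := by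
  refine ⟨Ideal.comap_ne_top f hI.1, fun a b ha hb hab => ?_⟩
  simp only [Ideal.mem_comap, map_add, map_sub, map_pow] at hab ⊢
  exact hI.2 _ _ ((map_ne_zero_iff f hf).2 ha) ((map_ne_zero_iff f hf).2 hb) hab

end IsSdfAbsorbing

namespace Polynomial

variable {R : Type*} [CommRing R]

theorem constantCoeff_comp_C : (constantCoeff : R[X] →+* R).comp C = RingHom.id R :=
  RingHom.ext fun _ => coeff_C_zero

theorem map_C_sup_span_X (I : Ideal R) :
    I.map C ⊔ Ideal.span {(X : R[X])} = I.comap constantCoeff := by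
  rw [← ker_constantCoeff, RingHom.ker,
    ← Ideal.comap_map_of_surjective (constantCoeff (R := R)) constantCoeff_surjective,
    Ideal.map_map, constantCoeff_comp_C, Ideal.map_id]

end Polynomial

theorem stmt14_general {R : Type*} [CommRing R] (I : Ideal R)
    (hI0 : I ≠ ⊥) :
    IsSdfAbsorbing (I.map (Polynomial.C : R →+* Polynomial R) ⊔
        Ideal.span {(Polynomial.X : Polynomial R)}) ↔
      IsSdfAbsorbing I := by
  rw [map_C_sup_span_X]
  refine ⟨fun h => ?_, fun h => h.comap hI0 constantCoeff⟩
  simpa only [Ideal.comap_comap, constantCoeff_comp_C, Ideal.comap_id] using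
    h.comap_of_injective C_injective

theorem stmt14 {R : Type*} [CommRing R] [Nontrivial R] (I : Ideal R)
    (hI0 : I ≠ ⊥) (hIproper : I ≠ ⊤) :
    IsSdfAbsorbing (I.map (Polynomial.C : R →+* Polynomial R) ⊔
        Ideal.span {(Polynomial.X : Polynomial R)}) ↔
      IsSdfAbsorbing I :=
  stmt14_general I hI0
end
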